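/- arXiv:2509.11538 — 2 statements merged into one kernel-verified Lean document; each statement's English description precedes it below -/
import Mathlib

section
/- Let n ≥ 1 and let M be an n×n real matrix with nonnegative entries that is irreducible. If p is a row vector with all entries strictly positive and μ is a real number such that p·M = μ·p, then μ = ρ(M). Moreover, if q is another row vector with all entries strictly positive satisfying q·M = ρ(M)·q, then q = c·p for some real scalar c > 0. -/
/-!
If `v ≠ 0` is a right eigenvector of `M` for `z ∈ ℂ`, the triangle inequality gives
`|z| |v| ≤ M |v|` entrywise; pairing with the positive left eigenvector `p` turns this into
`|z| ⟨p, |v|⟩ ≤ ⟨p, M |v|⟩ = μ ⟨p, |v|⟩` with `⟨p, |v|⟩ > 0`, so `μ` dominates the spectrum,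
to which it belongs. For uniqueness, let `c p` be the largest multiple of `p` below `q`: then
`q - c p` is a nonnegative left eigenvector with a zero entry, and irreducibility carries any
positive entry of it to every index, so `q = c p`.
-/

open Matrix

/-- Spectral radius of a real square matrix: the supremum (here: maximum) of the
absolute values of its complex eigenvalues. -/
noncomputable def specRad {n : ℕ} (M : Matrix (Fin n) (Fin n) ℝ) : ℝ :=
  sSup ((fun z : ℂ => ‖z‖) '' spectrum ℂ (M.map (Complex.ofReal ·)))

/-- A nonnegative matrix is irreducible if for every pair of indices `(i, j)`
there is a positive power `k` with `(M ^ k) i j > 0`. -/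
def MatIrreducible {n : ℕ} (M : Matrix (Fin n) (Fin n) ℝ) : Prop :=
  ∀ i j : Fin n, ∃ k : ℕ, 0 < k ∧ 0 < (M ^ k) i j

namespace Matrix

variable {ι : Type*} [Fintype ι]

theorem le_of_smul_le_mulVec {R : Type*} [CommRing R] [LinearOrder R] [IsStrictOrderedRing R]
    {A : Matrix ι ι R} {p w : ι → R} {μ c : R} (hp : ∀ i, 0 < p i) (hpA : p ᵥ* A = μ • p)
    (hw : 0 ≤ w) (hw0 : w ≠ 0) (h : c • w ≤ A *ᵥ w) : c ≤ μ := by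
  have hpw : 0 < p ⬝ᵥ w := by
    obtain ⟨i, hi⟩ := Function.ne_iff.mp hw0
    exact Finset.sum_pos' (fun j _ => mul_nonneg (hp j).le (hw j))
      ⟨i, Finset.mem_univ i, mul_pos (hp i) ((hw i).lt_of_ne' hi)⟩
  refine le_of_mul_le_mul_right ?_ hpw
  calc c * (p ⬝ᵥ w) = p ⬝ᵥ (c • w) := by rw [dotProduct_smul, smul_eq_mul]
    _ ≤ p ⬝ᵥ (A *ᵥ w) := Finset.sum_le_sum fun i _ => mul_le_mul_of_nonneg_left (h i) (hp i).le
    _ = μ * (p ⬝ᵥ w) := by rw [dotProduct_mulVec, hpA, smul_dotProduct, smul_eq_mul]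

theorem norm_smul_norm_le_mulVec_norm {A : Matrix ι ι ℝ} (hA : ∀ i j, 0 ≤ A i j) {v : ι → ℂ}
    {z : ℂ} (h : A.map (Complex.ofReal ·) *ᵥ v = z • v) :
    ‖z‖ • (fun i => ‖v i‖) ≤ A *ᵥ fun i => ‖v i‖ := fun i =>
  calc ‖z‖ * ‖v i‖ = ‖∑ j, (A i j : ℂ) * v j‖ := by
        rw [← norm_mul, ← smul_eq_mul, ← Pi.smul_apply, ← h]; rfl
    _ ≤ ∑ j, ‖(A i j : ℂ) * v j‖ := norm_sum_le _ _
    _ = (A *ᵥ fun i => ‖v i‖) i := by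
        simp only [norm_mul, Complex.norm_real, Real.norm_of_nonneg (hA _ _)]; rfl

variable [DecidableEq ι]

theorem vecMul_pow_of_vecMul_eq_smul {R : Type*} [CommSemiring R] {A : Matrix ι ι R}
    {v : ι → R} {μ : R} (h : v ᵥ* A = μ • v) (k : ℕ) : v ᵥ* A ^ k = μ ^ k • v := by
  induction k with
  | zero => simp
  | succ k ih => rw [pow_succ, ← vecMul_vecMul, ih, smul_vecMul, h, smul_smul, pow_succ]

section Spectrum

variable {K : Type*} [Field K] {A : Matrix ι ι K} {μ : K}

theorem mem_spectrum_iff_exists_mulVec_eq_smul : μ ∈ spectrum K A ↔ ∃ v ≠ 0, A *ᵥ v = μ • v := by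
  simp only [spectrum.mem_iff, Algebra.algebraMap_eq_smul_one, isUnit_iff_isUnit_det,
    isUnit_iff_ne_zero, not_not, ← exists_mulVec_eq_zero_iff, sub_mulVec, smul_mulVec,
    one_mulVec, sub_eq_zero, eq_comm (a := A *ᵥ _)]

theorem mem_spectrum_iff_exists_vecMul_eq_smul : μ ∈ spectrum K A ↔ ∃ v ≠ 0, v ᵥ* A = μ • v := by
  rw [mem_spectrum_iff_isRoot_charpoly, ← charpoly_transpose, ← mem_spectrum_iff_isRoot_charpoly,
    mem_spectrum_iff_exists_mulVec_eq_smul]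
  simp only [mulVec_transpose]

theorem map_mem_spectrum_map {L : Type*} [Field L] (f : K →+* L) (h : μ ∈ spectrum K A) :
    f μ ∈ spectrum L (A.map f) := by
  rw [mem_spectrum_iff_isRoot_charpoly] at h ⊢
  rw [charpoly_map]
  exact h.map

end Spectrum

theorem norm_le_of_mem_spectrum_of_vecMul_eq_smul {A : Matrix ι ι ℝ} (hA : ∀ i j, 0 ≤ A i j)
    {p : ι → ℝ} {μ : ℝ} (hp : ∀ i, 0 < p i) (hpA : p ᵥ* A = μ • p) {z : ℂ}
    (hz : z ∈ spectrum ℂ (A.map (Complex.ofReal ·))) : ‖z‖ ≤ μ := by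
  obtain ⟨v, hv0, hv⟩ := mem_spectrum_iff_exists_mulVec_eq_smul.mp hz
  refine le_of_smul_le_mulVec hp hpA (fun i => norm_nonneg (v i)) ?_
    (norm_smul_norm_le_mulVec_norm hA hv)
  exact fun h => hv0 (funext fun i => norm_eq_zero.mp (congrFun h i))

section Irreducible

variable {R : Type*} [Field R] [LinearOrder R] [IsStrictOrderedRing R] {A : Matrix ι ι R} {μ : R}

theorem IsIrreducible.eq_zero_of_vecMul_eq_smul (hA : A.IsIrreducible) {r : ι → R} (hr : 0 ≤ r)
    (hrA : r ᵥ* A = μ • r) {i : ι} (hi : r i = 0) : r = 0 := by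
  by_contra hr0
  obtain ⟨j, hj⟩ := Function.ne_iff.mp hr0
  obtain ⟨k, -, hk⟩ := (isIrreducible_iff_exists_pow_pos hA.nonneg).mp hA j i
  have hpos : 0 < (r ᵥ* A ^ k) i :=
    Finset.sum_pos' (fun l _ => mul_nonneg (hr l) (pow_apply_nonneg hA.nonneg k l i))
      ⟨j, Finset.mem_univ j, mul_pos ((hr j).lt_of_ne' hj) hk⟩
  simp [vecMul_pow_of_vecMul_eq_smul hrA, hi] at hpos

theorem IsIrreducible.exists_pos_smul_eq_of_vecMul_eq_smul [Nonempty ι] (hA : A.IsIrreducible)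
    {p q : ι → R} (hp : ∀ i, 0 < p i) (hq : ∀ i, 0 < q i) (hpA : p ᵥ* A = μ • p)
    (hqA : q ᵥ* A = μ • q) : ∃ c : R, 0 < c ∧ q = c • p := by
  obtain ⟨i, -, hi⟩ := Finset.exists_min_image Finset.univ (fun i => q i / p i)
    Finset.univ_nonempty
  set c := q i / p i
  have hdiff : 0 ≤ q - c • p := fun j => by
    simpa [sub_nonneg] using (le_div_iff₀ (hp j)).mp (hi j (Finset.mem_univ j))
  have hdiffA : (q - c • p) ᵥ* A = μ • (q - c • p) := by
    rw [sub_vecMul, smul_vecMul, hpA, hqA, smul_sub, smul_comm]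
  have hdiff_i : (q - c • p) i = 0 := by simp [c, div_mul_cancel₀ _ (hp i).ne']
  refine ⟨c, div_pos (hq i) (hp i), sub_eq_zero.mp ?_⟩
  exact hA.eq_zero_of_vecMul_eq_smul hdiff hdiffA hdiff_i

end Irreducible

end Matrix

/-- for an irreducible nonnegative matrix, any strictly positive
left eigenvector has eigenvalue `specRad M`, and the positive left eigenvector is
unique up to a positive scalar. -/
theorem stmt_1 {n : ℕ} (hn : 1 ≤ n) (M : Matrix (Fin n) (Fin n) ℝ)
    (hM : ∀ i j, 0 ≤ M i j) (hirr : MatIrreducible M)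
    (p : Fin n → ℝ) (hp : ∀ i, 0 < p i) (μ : ℝ) (hpM : p ᵥ* M = μ • p) :
    μ = specRad M ∧
      ∀ q : Fin n → ℝ, (∀ i, 0 < q i) → q ᵥ* M = specRad M • q →
        ∃ c : ℝ, 0 < c ∧ q = c • p := by
  have : Nonempty (Fin n) := ⟨⟨0, hn⟩⟩
  have hp0 : p ≠ 0 := fun h => (hp ⟨0, hn⟩).ne' (congrFun h _)
  have hμ : (μ : ℂ) ∈ spectrum ℂ (M.map (Complex.ofReal ·)) :=
    map_mem_spectrum_map Complex.ofRealHom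
      (mem_spectrum_iff_exists_vecMul_eq_smul.mpr ⟨p, hp0, hpM⟩)
  have hbound : ∀ z ∈ spectrum ℂ (M.map (Complex.ofReal ·)), ‖z‖ ≤ μ :=
    fun z hz => norm_le_of_mem_spectrum_of_vecMul_eq_smul hM hp hpM hz
  have hμ_norm : ‖(μ : ℂ)‖ = μ := by
    have h := hbound _ hμ
    rw [Complex.norm_real, Real.norm_eq_abs] at h ⊢
    exact abs_of_nonneg ((abs_nonneg μ).trans h)
  have hμ_eq : specRad M = μ :=
    IsGreatest.csSup_eq ⟨⟨μ, hμ, hμ_norm⟩, Set.forall_mem_image.mpr hbound⟩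
  have hirr' : M.IsIrreducible := (isIrreducible_iff_exists_pow_pos hM).mpr hirr
  exact ⟨hμ_eq.symm, fun q hq hqM =>
    hirr'.exists_pos_smul_eq_of_vecMul_eq_smul hp hq hpM (hμ_eq ▸ hqM)⟩
end

section
/- (Perturbation derivative of the Perron root.) Let n ≥ 1 and let M be an n×n real matrix with nonnegative entries that is irreducible, with spectral radius λ = ρ(M). Let u be a column vector with all entries strictly positive satisfying M·u = λ·u, let v be a column vector with all entries strictly positive satisfying vᵀ·M = λ·vᵀ, normalized so that vᵀ·u = 1. Then for any n×n real matrix E there exist ε₀ > 0 and a function μ : (-ε₀, ε₀) → ℝ such that μ(0) = λ, for every ε ∈ (-ε₀, ε₀) the number μ(ε) is a real eigenvalue of M + ε·E, and μ is differentiable at 0 with derivative μ'(0) = vᵀ·E·u. -/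
open Matrix

/-!
The Perron root is a geometrically simple eigenvalue: if `u > 0` is a `λ`-eigenvector of an
irreducible nonnegative `M` and `w` is another one, then for `c = min wᵢ / uᵢ` the vector
`w - c • u` is a nonnegative eigenvector with a zero entry, which irreducibility forces to vanish.

Eigenpairs of `M + ε • E` normalized by `v ⬝ᵥ w = 1` are the zeros of
`(ε, μ, w) ↦ (v ⬝ᵥ w - 1, (M + ε • E) *ᵥ w - μ • w)`. At `(0, λ, u)` its partial derivative in
`(μ, w)` is `(ℓ, w) ↦ (v ⬝ᵥ w, (M - λ) *ᵥ w - ℓ • u)`; pairing with the left eigenvector `v` kills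
`(M - λ) *ᵥ w`, so a kernel element has `ℓ = 0`, then `w ∈ ℝ u`, then `w = 0`. The implicit
function theorem yields a differentiable branch `ε ↦ (μ ε, w ε)`, and pairing the differentiated
equation with `v` gives `μ'(0) = v ⬝ᵥ E *ᵥ u`.
-/

open Filter Topology

theorem ContinuousLinearMap.isInvertible_of_injective {𝕜 V : Type*} [NontriviallyNormedField 𝕜]
    [CompleteSpace 𝕜] [NormedAddCommGroup V] [NormedSpace 𝕜 V] [FiniteDimensional 𝕜 V]
    {f : V →L[𝕜] V} (hf : Function.Injective f) : f.IsInvertible :=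
  ⟨(LinearEquiv.ofInjectiveEndo (f : V →ₗ[𝕜] V) hf).toContinuousLinearEquiv, rfl⟩

namespace Matrix

section Eigenvector

variable {ι K : Type*} [Fintype ι] [DecidableEq ι]

theorem mem_spectrum_of_mulVec_eq_smul [Field K] {A : Matrix ι ι K} {θ : K} {w : ι → K}
    (hw : w ≠ 0) (h : A *ᵥ w = θ • w) : θ ∈ spectrum K A := by
  rw [← spectrum_toLin', ← Module.End.hasEigenvalue_iff_mem_spectrum]
  exact Module.End.hasEigenvalue_of_hasEigenvector ⟨Module.End.mem_eigenspace_iff.2 h, hw⟩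

theorem pow_mulVec_of_mulVec_eq_smul [CommSemiring K] {A : Matrix ι ι K} {θ : K} {w : ι → K}
    (h : A *ᵥ w = θ • w) (k : ℕ) : (A ^ k) *ᵥ w = θ ^ k • w := by
  induction k with
  | zero => simp
  | succ k ih => rw [pow_succ, ← mulVec_mulVec, h, mulVec_smul, ih, smul_smul, pow_succ']

variable [Field K] [LinearOrder K] [IsStrictOrderedRing K] {A : Matrix ι ι K} {θ : K}

theorem IsIrreducible.eq_zero_of_nonneg_of_mulVec_eq_smul (hA : A.IsIrreducible) {z : ι → K}
    (hz : 0 ≤ z) (hAz : A *ᵥ z = θ • z) {j : ι} (hj : z j = 0) : z = 0 := by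
  funext i
  refine (hz i).antisymm' (not_lt.1 fun hi => ?_)
  obtain ⟨k, -, hk⟩ := (isIrreducible_iff_exists_pow_pos hA.nonneg).1 hA j i
  have hsum : (A ^ k) j i * z i ≤ ((A ^ k) *ᵥ z) j :=
    Finset.single_le_sum (f := fun l => (A ^ k) j l * z l)
      (fun l _ => mul_nonneg (pow_apply_nonneg hA.nonneg k j l) (hz l)) (Finset.mem_univ i)
  rw [pow_mulVec_of_mulVec_eq_smul hAz, Pi.smul_apply, hj, smul_zero] at hsum
  exact (mul_pos hk hi).not_ge hsum

theorem IsIrreducible.eq_smul_of_mulVec_eq_smul (hA : A.IsIrreducible) {u w : ι → K}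
    (hu : ∀ i, 0 < u i) (hAu : A *ᵥ u = θ • u) (hAw : A *ᵥ w = θ • w) :
    ∃ c : K, w = c • u := by
  cases isEmpty_or_nonempty ι
  · exact ⟨0, Subsingleton.elim _ _⟩
  obtain ⟨j, -, hj⟩ :=
    Finset.exists_min_image Finset.univ (fun i => w i / u i) Finset.univ_nonempty
  refine ⟨w j / u j, sub_eq_zero.1
    (hA.eq_zero_of_nonneg_of_mulVec_eq_smul (θ := θ) (j := j) (fun i => ?_) ?_ ?_)⟩
  · have := (le_div_iff₀ (hu i)).1 (hj i (Finset.mem_univ i))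
    simp only [Pi.zero_apply, Pi.sub_apply, Pi.smul_apply, smul_eq_mul]
    linarith
  · rw [mulVec_sub, mulVec_smul, hAu, hAw, smul_sub, smul_comm]
  · simp [div_mul_cancel₀ _ (hu j).ne']

end Eigenvector

section Perturbation

variable {ι : Type*} [Fintype ι] (A E : Matrix ι ι ℝ) (v : ι → ℝ)

noncomputable def eigenpairEquation (p : ℝ × ℝ × (ι → ℝ)) : ℝ × (ι → ℝ) :=
  (v ⬝ᵥ p.2.2 - 1, (A + p.1 • E) *ᵥ p.2.2 - p.2.1 • p.2.2)

noncomputable def eigenpairEquationDeriv (θ : ℝ) (u : ι → ℝ) :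
    ℝ × ℝ × (ι → ℝ) →L[ℝ] ℝ × (ι → ℝ) :=
  LinearMap.toContinuousLinearMap
    { toFun := fun p => (v ⬝ᵥ p.2.2, A *ᵥ p.2.2 + p.1 • (E *ᵥ u) - p.2.1 • u - θ • p.2.2)
      map_add' := fun p q => by
        refine Prod.ext (dotProduct_add ..) ?_
        simp only [Prod.fst_add, Prod.snd_add, mulVec_add]
        module
      map_smul' := fun c p => by
        refine Prod.ext (dotProduct_smul ..) ?_
        simp only [Prod.smul_fst, Prod.smul_snd, mulVec_smul, RingHom.id_apply]
        module }

@[simp] theorem eigenpairEquationDeriv_apply (θ : ℝ) (u : ι → ℝ) (p : ℝ × ℝ × (ι → ℝ)) :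
    eigenpairEquationDeriv A E v θ u p =
      (v ⬝ᵥ p.2.2, A *ᵥ p.2.2 + p.1 • (E *ᵥ u) - p.2.1 • u - θ • p.2.2) := rfl

theorem hasStrictFDerivAt_eigenpairEquation (θ : ℝ) (u : ι → ℝ) :
    HasStrictFDerivAt (eigenpairEquation A E v) (eigenpairEquationDeriv A E v θ u) (0, θ, u) := by
  let x : ℝ × ℝ × (ι → ℝ) := (0, θ, u)
  let lin (B : Matrix ι ι ℝ) : (ι → ℝ) →L[ℝ] ι → ℝ := LinearMap.toContinuousLinearMap B.mulVecLin
  have hε : HasStrictFDerivAt (fun p : ℝ × ℝ × (ι → ℝ) => p.1) _ x :=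
    hasStrictFDerivAt_fst (𝕜 := ℝ)
  have hμ : HasStrictFDerivAt (fun p : ℝ × ℝ × (ι → ℝ) => p.2.1) _ x :=
    (hasStrictFDerivAt_snd (𝕜 := ℝ)).fst
  have hw : HasStrictFDerivAt (fun p : ℝ × ℝ × (ι → ℝ) => p.2.2) _ x :=
    (hasStrictFDerivAt_snd (𝕜 := ℝ)).snd
  have hdot := ((LinearMap.toContinuousLinearMap (dotProductBilin ℝ ℝ v)).hasStrictFDerivAt.comp
    x hw).sub_const 1
  have hvec := (((lin A).hasStrictFDerivAt.comp x hw).add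
    (hε.smul ((lin E).hasStrictFDerivAt.comp x hw))).sub (hμ.smul hw)
  refine (hdot.prodMk hvec).congr_fderiv ?_ |>.congr_of_eventuallyEq (.of_forall fun p => ?_)
  · refine ContinuousLinearMap.ext fun p => Prod.ext rfl ?_
    simp only [x, lin, zero_smul, zero_add, LinearMap.coe_toContinuousLinearMap',
      mulVecBilin_apply, ContinuousLinearMap.prod_apply, ContinuousLinearMap.comp_apply,
      ContinuousLinearMap.coe_snd', ContinuousLinearMap.coe_fst', _root_.sub_apply,
      _root_.add_apply, _root_.smul_apply, ContinuousLinearMap.smulRight_apply,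
      eigenpairEquationDeriv_apply]
    abel
  · refine Prod.ext rfl ?_
    simp [eigenpairEquation, lin, add_mulVec, smul_mulVec]

variable {A E v} {θ : ℝ} {u : ι → ℝ}

theorem dotProduct_eigenpairEquationDeriv_snd (hvA : v ᵥ* A = θ • v) (hvu : v ⬝ᵥ u = 1)
    (p : ℝ × ℝ × (ι → ℝ)) :
    v ⬝ᵥ (eigenpairEquationDeriv A E v θ u p).2 = p.1 * (v ⬝ᵥ (E *ᵥ u)) - p.2.1 := by
  simp only [eigenpairEquationDeriv_apply, dotProduct_sub, dotProduct_add, dotProduct_smul,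
    dotProduct_mulVec, hvA, smul_dotProduct, hvu, smul_eq_mul]
  ring

theorem injective_eigenpairEquationDeriv_comp_inr (hvA : v ᵥ* A = θ • v) (hvu : v ⬝ᵥ u = 1)
    (hsimple : ∀ w, A *ᵥ w = θ • w → ∃ c : ℝ, w = c • u) :
    Function.Injective (eigenpairEquationDeriv A E v θ u ∘L .inr ℝ ℝ (ℝ × (ι → ℝ))) := by
  refine (injective_iff_map_eq_zero _).2 fun ⟨ℓ, w⟩ h => ?_
  have hℓ : ℓ = 0 := by
    simpa using (dotProduct_eigenpairEquationDeriv_snd (E := E) hvA hvu (0, ℓ, w)).symm.trans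
      (congrArg (v ⬝ᵥ ·.2) h)
  subst hℓ
  have hdot : v ⬝ᵥ w = 0 := congrArg Prod.fst h
  have heig : A *ᵥ w = θ • w := by
    simpa [sub_eq_zero] using congrArg Prod.snd h
  obtain ⟨c, rfl⟩ := hsimple w heig
  rw [dotProduct_smul, hvu, smul_eq_mul, mul_one] at hdot
  simp [hdot]

theorem exists_eigenvalue_branch_hasDerivAt [DecidableEq ι] (hAu : A *ᵥ u = θ • u)
    (hvA : v ᵥ* A = θ • v) (hvu : v ⬝ᵥ u = 1)
    (hsimple : ∀ w, A *ᵥ w = θ • w → ∃ c : ℝ, w = c • u) :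
    ∃ μ : ℝ → ℝ, μ 0 = θ ∧ (∀ᶠ ε in 𝓝 0, μ ε ∈ spectrum ℝ (A + ε • E)) ∧
      HasDerivAt μ (v ⬝ᵥ (E *ᵥ u)) 0 := by
  have hD := hasStrictFDerivAt_eigenpairEquation A E v θ u
  have hinv := ContinuousLinearMap.isInvertible_of_injective
    (injective_eigenpairEquationDeriv_comp_inr (E := E) hvA hvu hsimple)
  have hzero : eigenpairEquation A E v (0, θ, u) = 0 := by simp [eigenpairEquation, hAu, hvu]
  set ψ := hD.implicitFunctionOfProdDomain hinv
  have hψ0 : ψ 0 = (θ, u) := eq_of_tendsto_nhds (hD.tendsto_implicitFunctionOfProdDomain hinv)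
  have hroot : ∀ᶠ ε in 𝓝 0, eigenpairEquation A E v (ε, ψ ε) = 0 := by
    simpa [hzero] using hD.eventually_apply_implicitFunctionOfProdDomain hinv
  obtain ⟨ψ', hψ'⟩ : ∃ ψ', HasFDerivAt ψ ψ' 0 :=
    ⟨_, (hD.hasStrictFDerivAt_implicitFunctionOfProdDomain hinv).hasFDerivAt⟩
  refine ⟨fun ε => (ψ ε).1, by simp [hψ0], ?_, ?_⟩
  · filter_upwards [hroot] with ε hε
    refine mem_spectrum_of_mulVec_eq_smul (w := (ψ ε).2) ?_ (sub_eq_zero.1 (congrArg Prod.snd hε))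
    intro h
    simpa [eigenpairEquation, h] using congrArg Prod.fst hε
  · have hD' : HasFDerivAt (eigenpairEquation A E v) (eigenpairEquationDeriv A E v θ u)
        (id 0, ψ 0) := by
      simpa [hψ0] using hD.hasFDerivAt
    have hchain := hD'.comp (0 : ℝ) ((hasFDerivAt_id 0).prodMk hψ')
    have hflat : eigenpairEquationDeriv A E v θ u (1, ψ' 1) = 0 := by
      simpa using congrArg (· 1)
        (hchain.unique ((hasFDerivAt_const 0 0).congr_of_eventuallyEq hroot))
    have hpair := dotProduct_eigenpairEquationDeriv_snd (E := E) hvA hvu (1, ψ' 1)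
    rw [hflat, Prod.snd_zero, dotProduct_zero, one_mul] at hpair
    exact (sub_eq_zero.1 hpair.symm).symm ▸ hψ'.fst.hasDerivAt

end Perturbation

end Matrix

theorem stmt_8_general {n : ℕ} (M : Matrix (Fin n) (Fin n) ℝ)
    (hM : ∀ i j, 0 ≤ M i j) (hirr : MatIrreducible M)
    (u v : Fin n → ℝ) (hu : ∀ i, 0 < u i)
    (hMu : M *ᵥ u = specRad M • u) (hvM : v ᵥ* M = specRad M • v)
    (hnorm : v ⬝ᵥ u = 1) (E : Matrix (Fin n) (Fin n) ℝ) :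
    ∃ ε₀ : ℝ, 0 < ε₀ ∧ ∃ μ : ℝ → ℝ,
      μ 0 = specRad M ∧
      (∀ ε ∈ Set.Ioo (-ε₀) ε₀, μ ε ∈ spectrum ℝ (M + ε • E)) ∧
      HasDerivAt μ (v ⬝ᵥ (E *ᵥ u)) 0 := by
  have hM' : M.IsIrreducible := (isIrreducible_iff_exists_pow_pos hM).2 hirr
  obtain ⟨μ, hμ0, hspec, hderiv⟩ := exists_eigenvalue_branch_hasDerivAt (E := E) hMu hvM hnorm
    fun _ hw => hM'.eq_smul_of_mulVec_eq_smul hu hMu hw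
  obtain ⟨ε₀, hε₀, hball⟩ := Metric.eventually_nhds_iff_ball.1 hspec
  refine ⟨ε₀, hε₀, μ, hμ0, fun ε hε => hball ε ?_, hderiv⟩
  simpa [Real.ball_eq_Ioo] using hε

/-- perturbation derivative of the Perron root: with Perron
vectors `u`, `v` normalized by `v ⬝ᵥ u = 1`, for any perturbation direction `E`
there is a locally defined real eigenvalue branch `μ(ε)` of `M + ε • E` through
`λ = specRad M` which is differentiable at `0` with `μ'(0) = vᵀ E u`. -/
theorem stmt_8 {n : ℕ} (hn : 1 ≤ n) (M : Matrix (Fin n) (Fin n) ℝ)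
    (hM : ∀ i j, 0 ≤ M i j) (hirr : MatIrreducible M)
    (u v : Fin n → ℝ) (hu : ∀ i, 0 < u i) (hv : ∀ i, 0 < v i)
    (hMu : M *ᵥ u = specRad M • u) (hvM : v ᵥ* M = specRad M • v)
    (hnorm : v ⬝ᵥ u = 1) (E : Matrix (Fin n) (Fin n) ℝ) :
    ∃ ε₀ : ℝ, 0 < ε₀ ∧ ∃ μ : ℝ → ℝ,
      μ 0 = specRad M ∧
      (∀ ε ∈ Set.Ioo (-ε₀) ε₀, μ ε ∈ spectrum ℝ (M + ε • E)) ∧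
      HasDerivAt μ (v ⬝ᵥ (E *ᵥ u)) 0 :=
  stmt_8_general M hM hirr u v hu hMu hvM hnorm E
end
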